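/- Let n ≥ 2, g ≥ 2, let C be either a block in [n] × [n] or the empty set, and for each 1 ≤ l ≤ 2g let D_l ⊆ [n] × [n] be a (possibly empty) union of blocks, with D̄_l = {(j,i) : (i,j) ∈ D_l}. Suppose M₁, …, M_{2g} ∈ SO(2n+1) satisfy, for each l and all 1 ≤ i, j ≤ n: if (i,j) ∈ D_l then the (i,j)-th 2×2 block of M_l is the zero matrix; if (i,j) ∉ D_l ∪ D̄_l and (i,j) ∈ C ∪ C̄ then (M_l)_{2i−1,2j−1} = −(M_l)_{2i,2j} and (M_l)_{2i,2j−1} = (M_l)_{2i−1,2j}; and if (i,j) ∉ D_l ∪ D̄_l and (i,j) ∉ C ∪ C̄ then (M_l)_{2i−1,2j−1} = (M_l)_{2i,2j} and (M_l)_{2i,2j−1} = −(M_l)_{2i−1,2j}. Then the product of commutators ∏_{l=1}^{g} [M_l, M_{g+l}] is not a generic element of T. -/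

import Mathlib

/-!
Write `C = V × Vᶜ` (with `V = ∅` when `C = ∅`) and `εᵢ = -1` for `i ∈ V`, `εᵢ = 1` otherwise.
Since every `D_l` is a union of blocks `W × Wᶜ`, the pair indices are preordered by the set of
those blocks whose row set contains them, and `M_l` is block upper triangular for this preorder,
with the blocks on the diagonal complex linear up to the signs `εᵢ εⱼ`. Going down the preorder,
orthogonality forces `M_l` to be block diagonal and to fix the last coordinate line: the two rows
of a pair are a rotation of each other on the pair coordinates, so their last entries `p, q`
satisfy `p² = q²` and `pq = 0`. Hence, after flipping the sign of the second coordinate of each pair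
`i` with `εᵢ = -1`, every `M_l` is the realification of a complex matrix `N_l`, and the product of
commutators is the realification of a complex matrix of determinant `1`. The torus element
`(θ₁, …, θₙ)` becomes the realification of `diag(e^{i εⱼ θⱼ})`, of determinant `e^{i Σ εⱼ θⱼ}`,
so `Σ εⱼ θⱼ ∈ 2πℤ`, against genericity.
-/

open Matrix Real

/-- Index `2i` (0-based; row `2i-1` in 1-based numbering) in `Fin (2n+1)`. -/
def ia {n : ℕ} (i : Fin n) : Fin (2*n+1) := ⟨2*i.val, by have := i.isLt; omega⟩

/-- Index `2i+1` (0-based; row `2i` in 1-based numbering) in `Fin (2n+1)`. -/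
def ib {n : ℕ} (i : Fin n) : Fin (2*n+1) := ⟨2*i.val+1, by have := i.isLt; omega⟩

/-- The last index `2n` in `Fin (2n+1)`. -/
def ilast (n : ℕ) : Fin (2*n+1) := ⟨2*n, by omega⟩

/-- Membership in SO(2n+1). -/
def SOodd (n : ℕ) (M : Matrix (Fin (2*n+1)) (Fin (2*n+1)) ℝ) : Prop :=
  M * Mᵀ = 1 ∧ M.det = 1

/-- The block-diagonal torus element `diag(R(θ₁), …, R(θₙ), 1)` of SO(2n+1). -/
noncomputable def torusMat (n : ℕ) (θ : Fin n → ℝ) :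
    Matrix (Fin (2*n+1)) (Fin (2*n+1)) ℝ :=
  Matrix.of fun r c =>
    if hr : r.val < 2*n then
      if c.val < 2*n then
        if r.val / 2 = c.val / 2 then
          if r.val % 2 = 0 then
            if c.val % 2 = 0 then Real.cos (θ ⟨r.val/2, by omega⟩)
            else -Real.sin (θ ⟨r.val/2, by omega⟩)
          else
            if c.val % 2 = 0 then Real.sin (θ ⟨r.val/2, by omega⟩)
            else Real.cos (θ ⟨r.val/2, by omega⟩)
        else 0
      else 0
    else if c.val < 2*n then 0 else 1

/-- `(θ₁, …, θₙ)` is a generic torus element: its centralizer in SO(2n+1) is exactly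
the torus, and the only `λ ∈ {-1,0,1}ⁿ` with `λ·θ ∈ 2πℤ` is `λ = 0`. -/
noncomputable def IsGeneric (n : ℕ) (θ : Fin n → ℝ) : Prop :=
  (∀ M, SOodd n M → M * torusMat n θ = torusMat n θ * M →
      ∃ φ : Fin n → ℝ, M = torusMat n φ) ∧
  (∀ lam : Fin n → ℤ, (∀ i, lam i = -1 ∨ lam i = 0 ∨ lam i = 1) →
      (∃ k : ℤ, ∑ i, (lam i : ℝ) * θ i = 2 * Real.pi * k) → ∀ i, lam i = 0)

/-- Commutator of matrices: `[P,Q] = P Q P⁻¹ Q⁻¹`. -/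
noncomputable def commMat (n : ℕ) (P Q : Matrix (Fin (2*n+1)) (Fin (2*n+1)) ℝ) :
    Matrix (Fin (2*n+1)) (Fin (2*n+1)) ℝ :=
  P * Q * P⁻¹ * Q⁻¹

/-- A block in [n] × [n]: a set of the form V × Vᶜ with ∅ ⊊ V ⊊ [n]. -/
def IsBlockFin (n : ℕ) (B : Finset (Fin n × Fin n)) : Prop :=
  ∃ V : Finset (Fin n), V.Nonempty ∧ V ≠ Finset.univ ∧ B = V ×ˢ Vᶜ

/-- A (possibly empty) union of blocks in [n] × [n]. -/
def IsUnionOfBlocksFin (n : ℕ) (D : Finset (Fin n × Fin n)) : Prop :=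
  ∃ S : Finset (Finset (Fin n × Fin n)), (∀ b ∈ S, IsBlockFin n b) ∧ D = S.sup id

theorem col_eq_zero_of_row_eq_zero {κ : Type*} [Fintype κ] [DecidableEq κ] {A : Matrix κ κ ℝ}
    (hA : A * Aᵀ = 1) (p : κ → Prop) [DecidablePred p]
    (hrow : ∀ x y, p x → ¬ p y → A x y = 0) : ∀ x y, p y → ¬ p x → A x y = 0 := by
  -- the `p`-block `B` is then orthogonal, so the `p`-columns of `A` have their whole norm in `B`
  set B : Matrix {x // p x} {x // p x} ℝ := A.submatrix (↑) (↑)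
  have hB : Bᵀ * B = 1 := by
    refine mul_eq_one_comm.mp (Matrix.ext fun x y => ?_)
    have hxy := congr_fun₂ hA x y
    have hout : ∑ z : {z // ¬ p z}, A x z * Aᵀ z y = 0 :=
      Finset.sum_eq_zero fun z _ => by rw [hrow x z x.2 z.2, zero_mul]
    rw [mul_apply, ← Fintype.sum_subtype_add_sum_subtype p, hout, add_zero] at hxy
    simpa [B, mul_apply, one_apply, Subtype.ext_iff] using hxy
  intro x y hy hx
  have hcol : (Aᵀ * A) y y = 1 := by rw [mul_eq_one_comm.mp hA, one_apply_eq]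
  have hcolB : (Bᵀ * B) ⟨y, hy⟩ ⟨y, hy⟩ = 1 := by rw [hB, one_apply_eq]
  rw [mul_apply, ← Fintype.sum_subtype_add_sum_subtype p] at hcol
  simp only [B, mul_apply, transpose_apply, submatrix_apply] at hcol hcolB
  have hrest : ∑ r : {r // ¬ p r}, A r y * A r y = 0 := by linarith
  rw [Fintype.sum_eq_zero_iff_of_nonneg fun _ => mul_self_nonneg _] at hrest
  exact mul_self_eq_zero.mp (congr_fun hrest ⟨x, hx⟩)

theorem inr_eq_zero_of_rotate {ι : Type*} [Fintype ι] {u v : ι × Fin 2 ⊕ Unit → ℝ}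
    (hv₀ : ∀ j, v (.inl (j, 0)) = -u (.inl (j, 1))) (hv₁ : ∀ j, v (.inl (j, 1)) = u (.inl (j, 0)))
    (huu : u ⬝ᵥ u = 1) (hvv : v ⬝ᵥ v = 1) (huv : u ⬝ᵥ v = 0) :
    u (.inr ()) = 0 ∧ v (.inr ()) = 0 := by
  simp only [dotProduct, Fintype.sum_sum_type, Fintype.sum_prod_type, Fin.sum_univ_two,
    Fintype.univ_unit, Finset.sum_singleton] at huu hvv huv
  have hnorm : ∑ j, (v (.inl (j, 0)) * v (.inl (j, 0)) + v (.inl (j, 1)) * v (.inl (j, 1))) =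
      ∑ j, (u (.inl (j, 0)) * u (.inl (j, 0)) + u (.inl (j, 1)) * u (.inl (j, 1))) :=
    Finset.sum_congr rfl fun j _ => by rw [hv₀, hv₁]; ring
  have horth : ∑ j, (u (.inl (j, 0)) * v (.inl (j, 0)) + u (.inl (j, 1)) * v (.inl (j, 1))) = 0 :=
    Finset.sum_eq_zero fun j _ => by rw [hv₀, hv₁]; ring
  rw [hnorm] at hvv
  rw [horth, zero_add] at huv
  set p := u (.inr ())
  set q := v (.inr ())
  have hsq : p ^ 2 = q ^ 2 := by linear_combination huu - hvv
  have hp : p ^ 4 = 0 := by linear_combination p ^ 2 * hsq + p * q * huv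
  have hq : q ^ 4 = 0 := by linear_combination -q ^ 2 * hsq + p * q * huv
  exact ⟨eq_zero_of_pow_eq_zero hp, eq_zero_of_pow_eq_zero hq⟩

/-- `A` commutes with the rotation of each coordinate pair `(i, 0), (i, 1)` and preserves the
last coordinate line and its complement. -/
structure IsComplexLinear {ι : Type*} (A : Matrix (ι × Fin 2 ⊕ Unit) (ι × Fin 2 ⊕ Unit) ℝ) :
    Prop where
  inl_inr : ∀ p, A (.inl p) (.inr ()) = 0
  inr_inl : ∀ p, A (.inr ()) (.inl p) = 0
  re : ∀ i j, A (.inl (i, 0)) (.inl (j, 0)) = A (.inl (i, 1)) (.inl (j, 1))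
  im : ∀ i j, A (.inl (i, 1)) (.inl (j, 0)) = -A (.inl (i, 0)) (.inl (j, 1))

theorem IsComplexLinear.transpose {ι : Type*} {A : Matrix (ι × Fin 2 ⊕ Unit) (ι × Fin 2 ⊕ Unit) ℝ}
    (hA : IsComplexLinear A) : IsComplexLinear Aᵀ :=
  ⟨hA.inr_inl, hA.inl_inr, fun i j => hA.re j i, fun i j => by
    simp only [transpose_apply, hA.im j i, neg_neg]⟩

section Classes

variable {ι α : Type*} [Fintype ι] [DecidableEq ι] [PartialOrder α] [WellFoundedGT α]
  {A : Matrix (ι × Fin 2 ⊕ Unit) (ι × Fin 2 ⊕ Unit) ℝ} {f : ι → α}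

def InClass (f : ι → α) (c : α) : ι × Fin 2 ⊕ Unit → Prop :=
  Sum.elim (fun p => f p.1 = c) fun _ => False

theorem apply_eq_zero_off_class (hA : A * Aᵀ = 1)
    (hzero : ∀ i j s t, ¬ f i ≤ f j → A (.inl (i, s)) (.inl (j, t)) = 0)
    (hre : ∀ i j, f i = f j → A (.inl (i, 0)) (.inl (j, 0)) = A (.inl (i, 1)) (.inl (j, 1)))
    (him : ∀ i j, f i = f j → A (.inl (i, 1)) (.inl (j, 0)) = -A (.inl (i, 0)) (.inl (j, 1)))
    (c : α) : (∀ x y, InClass f c y → ¬ InClass f c x → A x y = 0) ∧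
      ∀ i s, f i = c → A (.inl (i, s)) (.inr ()) = 0 := by
  classical
  induction c using WellFoundedGT.induction with
  | ind c IH =>
  have hpair : ∀ i j s t, f i = c → f j ≠ c → A (.inl (i, s)) (.inl (j, t)) = 0 := by
    intro i j s t hi hj
    by_cases hij : f i ≤ f j
    · exact (IH (f j) (lt_of_le_of_ne (hi ▸ hij) (Ne.symm hj))).1 _ _ rfl
        (by simpa [InClass, hi] using hj.symm)
    · exact hzero i j s t hij
  have hlast : ∀ i s, f i = c → A (.inl (i, s)) (.inr ()) = 0 := by
    intro i s hi
    have hrow (x y) : A x ⬝ᵥ A y = if x = y then 1 else 0 := by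
      simpa [mul_apply', one_apply] using congr_fun₂ hA x y
    have hv : ∀ j, A (.inl (i, 1)) (.inl (j, 0)) = -A (.inl (i, 0)) (.inl (j, 1)) ∧
        A (.inl (i, 1)) (.inl (j, 1)) = A (.inl (i, 0)) (.inl (j, 0)) := by
      intro j
      by_cases hj : f j = c
      · exact ⟨him i j (hi.trans hj.symm), (hre i j (hi.trans hj.symm)).symm⟩
      · simp only [hpair i j _ _ hi hj, neg_zero, and_self]
    obtain ⟨h₀, h₁⟩ := inr_eq_zero_of_rotate (fun j => (hv j).1) (fun j => (hv j).2)
      (by simpa using hrow (.inl (i, 0)) (.inl (i, 0)))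
      (by simpa using hrow (.inl (i, 1)) (.inl (i, 1)))
      (by simpa using hrow (.inl (i, 0)) (.inl (i, 1)))
    fin_cases s
    exacts [h₀, h₁]
  refine ⟨col_eq_zero_of_row_eq_zero hA (InClass f c) ?_, hlast⟩
  rintro (⟨i, s⟩ | ⟨⟩) (⟨j, t⟩ | ⟨⟩) hx hy
  exacts [hpair i j s t hx hy, hlast i s hx, hx.elim, hx.elim]

theorem isComplexLinear_of_orthogonal (hA : A * Aᵀ = 1)
    (hzero : ∀ i j s t, ¬ f i ≤ f j → A (.inl (i, s)) (.inl (j, t)) = 0)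
    (hre : ∀ i j, f i = f j → A (.inl (i, 0)) (.inl (j, 0)) = A (.inl (i, 1)) (.inl (j, 1)))
    (him : ∀ i j, f i = f j → A (.inl (i, 1)) (.inl (j, 0)) = -A (.inl (i, 0)) (.inl (j, 1))) :
    IsComplexLinear A := by
  have key := apply_eq_zero_off_class hA hzero hre him
  have hoff : ∀ i j s t, f i ≠ f j → A (.inl (i, s)) (.inl (j, t)) = 0 := fun i j s t h =>
    (key (f j)).1 _ _ rfl h
  refine ⟨fun ⟨i, s⟩ => (key (f i)).2 i s rfl, fun ⟨j, t⟩ => (key (f j)).1 _ _ rfl id,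
    fun i j => ?_, fun i j => ?_⟩ <;> by_cases h : f i = f j
  · exact hre i j h
  · rw [hoff i j _ _ h, hoff i j _ _ h]
  · exact him i j h
  · rw [hoff i j _ _ h, hoff i j _ _ h, neg_zero]

end Classes

section ComplexBlock

variable {ι : Type*} [Fintype ι] [DecidableEq ι]

noncomputable def realify : Matrix ι ι ℂ →ₐ[ℝ] Matrix (ι × Fin 2) (ι × Fin 2) ℝ :=
  (compAlgEquiv ι (Fin 2) ℝ ℝ).toAlgHom.comp (Algebra.leftMulMatrix Complex.basisOneI).mapMatrix

theorem realify_apply (N : Matrix ι ι ℂ) (i j : ι) (s t : Fin 2) :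
    realify N (i, s) (j, t) = !![(N i j).re, -(N i j).im; (N i j).im, (N i j).re] s t := by
  simp [realify, Algebra.leftMulMatrix_complex]

theorem realify_injective : Function.Injective (realify (ι := ι)) :=
  (compAlgEquiv ι (Fin 2) ℝ ℝ).injective.comp
    (map_injective (Algebra.leftMulMatrix_injective Complex.basisOneI))

noncomputable def complexBlock :
    Matrix ι ι ℂ × ℝ →* Matrix (ι × Fin 2 ⊕ Unit) (ι × Fin 2 ⊕ Unit) ℝ where
  toFun p := fromBlocks (realify p.1) 0 0 (diagonal fun _ => p.2)
  map_one' := by simp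
  map_mul' p q := by simp [fromBlocks_multiply]

theorem complexBlock_injective : Function.Injective (complexBlock (ι := ι)) := by
  intro p q h
  obtain ⟨h₁, -, -, h₂⟩ := fromBlocks_inj.mp h
  exact Prod.ext (realify_injective h₁) (by simpa using congr_fun₂ h₂ () ())

theorem IsComplexLinear.exists_complexBlock_eq {A : Matrix (ι × Fin 2 ⊕ Unit) (ι × Fin 2 ⊕ Unit) ℝ}
    (hA : IsComplexLinear A) : ∃ p, complexBlock p = A := by
  refine ⟨(of fun i j => ⟨A (.inl (i, 0)) (.inl (j, 0)), A (.inl (i, 1)) (.inl (j, 0))⟩,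
    A (.inr ()) (.inr ())), ?_⟩
  ext (⟨i, s⟩ | ⟨⟩) (⟨j, t⟩ | ⟨⟩)
  · fin_cases s <;> fin_cases t <;> simp [complexBlock, realify_apply, hA.re, hA.im]
  · simp [complexBlock, hA.inl_inr]
  · simp [complexBlock, hA.inr_inl]
  · simp [complexBlock]

theorem IsComplexLinear.exists_complexBlock_eq_of_orthogonal
    {A : Matrix (ι × Fin 2 ⊕ Unit) (ι × Fin 2 ⊕ Unit) ℝ} (hA : IsComplexLinear A)
    (hAA : A * Aᵀ = 1) : ∃ p q, complexBlock p = A ∧ complexBlock q = Aᵀ ∧ p * q = 1 := by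
  obtain ⟨p, rfl⟩ := hA.exists_complexBlock_eq
  obtain ⟨q, hq⟩ := hA.transpose.exists_complexBlock_eq
  exact ⟨p, q, rfl, hq, complexBlock_injective (by rw [map_mul, hq, hAA, map_one])⟩

noncomputable def specialComplexBlocks :
    Submonoid (Matrix (ι × Fin 2 ⊕ Unit) (ι × Fin 2 ⊕ Unit) ℝ) :=
  (MonoidHom.mker (detMonoidHom.comp (MonoidHom.fst _ ℝ))).map complexBlock

theorem commutator_mem_specialComplexBlocks
    {A B : Matrix (ι × Fin 2 ⊕ Unit) (ι × Fin 2 ⊕ Unit) ℝ}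
    (hA : IsComplexLinear A) (hB : IsComplexLinear B) (hAA : A * Aᵀ = 1) (hBB : B * Bᵀ = 1) :
    A * B * Aᵀ * Bᵀ ∈ specialComplexBlocks := by
  obtain ⟨p, p', rfl, hp', hpp'⟩ := hA.exists_complexBlock_eq_of_orthogonal hAA
  obtain ⟨q, q', rfl, hq', hqq'⟩ := hB.exists_complexBlock_eq_of_orthogonal hBB
  refine ⟨p * q * p' * q', ?_, by rw [map_mul, map_mul, map_mul, hp', hq']⟩
  set χ := detMonoidHom.comp (MonoidHom.fst (Matrix ι ι ℂ) ℝ)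
  change χ (p * q * p' * q') = 1
  rw [map_mul, map_mul, map_mul, mul_right_comm (χ p), mul_assoc, ← map_mul, ← map_mul,
    hpp', hqq', map_one, one_mul]

end ComplexBlock

def pairEquiv (n : ℕ) : Fin n × Fin 2 ⊕ Unit ≃ Fin (2 * n + 1) :=
  ((finProdFinEquiv.trans (finCongr (Nat.mul_comm n 2))).sumCongr finOneEquiv.symm).trans
    finSumFinEquiv

@[simp] theorem pairEquiv_inl_zero {n : ℕ} (i : Fin n) : pairEquiv n (.inl (i, 0)) = ia i := by
  ext; simp [pairEquiv, ia]

@[simp] theorem pairEquiv_inl_one {n : ℕ} (i : Fin n) : pairEquiv n (.inl (i, 1)) = ib i := by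
  ext; simp [pairEquiv, ib]; ring

@[simp] theorem pairEquiv_inr (n : ℕ) (u : Unit) : pairEquiv n (.inr u) = ilast n := by
  ext; simp [pairEquiv, ilast]

theorem torusMat_pairEquiv {n : ℕ} (θ : Fin n → ℝ) (x y : Fin n × Fin 2 ⊕ Unit) :
    torusMat n θ (pairEquiv n x) (pairEquiv n y) =
      complexBlock (diagonal fun i => Complex.exp (θ i * Complex.I), 1) x y := by
  have h₁ : ∀ k : ℕ, (2 * k + 1) / 2 = k := by omega
  have h₀ : ∀ k : ℕ, 2 * k / 2 = k := by omega
  rcases x with ⟨⟨i, hi⟩, s⟩ | ⟨⟩ <;> rcases y with ⟨⟨j, hj⟩, t⟩ | ⟨⟩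
  · have hi' : 2 * i + 1 < 2 * n := by omega
    have hj' : 2 * j + 1 < 2 * n := by omega
    by_cases hij : i = j
    · subst hij
      fin_cases s <;> fin_cases t <;>
        simp [complexBlock, realify_apply, torusMat, ia, ib, h₀, h₁, hi, hi',
          Complex.exp_ofReal_mul_I_re, Complex.exp_ofReal_mul_I_im]
    · fin_cases s <;> fin_cases t <;>
        simp [complexBlock, realify_apply, torusMat, ia, ib, h₀, h₁, hi, hi', hj, hj', hij]
  · fin_cases s <;>
      simp [complexBlock, torusMat, ia, ib, ilast, hi, show 2 * i + 1 < 2 * n by omega]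
  · fin_cases t <;>
      simp [complexBlock, torusMat, ia, ib, ilast, hj, show 2 * j + 1 < 2 * n by omega]
  · simp [complexBlock, torusMat, ilast]

section Twist

variable {n : ℕ} (ε : Fin n → ℤˣ)

def pairSign : Fin n × Fin 2 ⊕ Unit → ℝ :=
  Sum.elim (fun p => ((ε p.1 ^ (p.2 : ℕ) : ℤˣ) : ℤ)) 1

theorem pairSign_mul_self (x : Fin n × Fin 2 ⊕ Unit) : pairSign ε x * pairSign ε x = 1 := by
  rcases x with ⟨i, s⟩ | _ <;> simp [pairSign, ← Int.cast_mul, ← Units.val_mul, ← mul_pow]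

/-- `A` in the coordinates `pairEquiv`, with the second coordinate of each pair `i` flipped when
`ε i = -1`; this turns complex linearity up to the signs `ε i * ε j` into `IsComplexLinear`. -/
noncomputable def toPairs : Matrix (Fin (2 * n + 1)) (Fin (2 * n + 1)) ℝ →*
    Matrix (Fin n × Fin 2 ⊕ Unit) (Fin n × Fin 2 ⊕ Unit) ℝ where
  toFun A := diagonal (pairSign ε) * A.submatrix (pairEquiv n) (pairEquiv n) * diagonal (pairSign ε)
  map_one' := by simp [pairSign_mul_self]
  map_mul' A B := by
    have hDD : diagonal (pairSign ε) * diagonal (pairSign ε) = 1 := by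
      simp [diagonal_mul_diagonal, pairSign_mul_self]
    simp only [Matrix.mul_assoc, ← submatrix_mul_equiv _ _ _ (pairEquiv n)]
    rw [← Matrix.mul_assoc (diagonal _) (diagonal _), hDD, Matrix.one_mul]

theorem toPairs_apply (A : Matrix (Fin (2 * n + 1)) (Fin (2 * n + 1)) ℝ) (x y) :
    toPairs ε A x y = pairSign ε x * A (pairEquiv n x) (pairEquiv n y) * pairSign ε y := by
  simp [toPairs, diagonal_mul, mul_diagonal]

theorem toPairs_transpose (A : Matrix (Fin (2 * n + 1)) (Fin (2 * n + 1)) ℝ) :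
    toPairs ε Aᵀ = (toPairs ε A)ᵀ := by
  ext x y
  simp only [toPairs_apply, transpose_apply]
  ring

theorem toPairs_mul_transpose {A : Matrix (Fin (2 * n + 1)) (Fin (2 * n + 1)) ℝ}
    (hA : A * Aᵀ = 1) : toPairs ε A * (toPairs ε A)ᵀ = 1 := by
  rw [← toPairs_transpose, ← map_mul, hA, map_one]

theorem toPairs_torusMat (θ : Fin n → ℝ) :
    toPairs ε (torusMat n θ) =
      complexBlock (diagonal fun i => Complex.exp (((ε i : ℤ) * θ i : ℝ) * Complex.I), 1) := by
  ext (⟨i, s⟩ | _) (⟨j, t⟩ | _) <;> simp only [toPairs_apply, torusMat_pairEquiv]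
  · by_cases hij : i = j
    · subst hij
      rcases Int.units_eq_one_or (ε i) with h | h <;> fin_cases s <;> fin_cases t <;>
        simp [complexBlock, realify_apply, pairSign, h, Complex.exp_re, Complex.exp_im]
    · fin_cases s <;> fin_cases t <;> simp [complexBlock, realify_apply, hij]
  all_goals simp [complexBlock, pairSign]

end Twist

theorem IsGeneric.prod_exp_ne_one {n : ℕ} {θ : Fin n → ℝ} (hθ : IsGeneric n θ) (hn : 0 < n)
    (ε : Fin n → ℤˣ) : ∏ i, Complex.exp (((ε i : ℤ) * θ i : ℝ) * Complex.I) ≠ 1 := by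
  rw [← Complex.exp_sum, Ne, Complex.exp_eq_one_iff]
  rintro ⟨k, hk⟩
  have hsum : ∑ i, ((ε i : ℤ) : ℝ) * θ i = 2 * Real.pi * k := by
    simpa [← Finset.sum_mul, mul_comm, mul_left_comm] using congrArg Complex.im hk
  refine (ε ⟨0, hn⟩).ne_zero (hθ.2 (fun i => ε i) (fun i => ?_) ⟨k, hsum⟩ ⟨0, hn⟩)
  rcases Int.units_eq_one_or (ε i) with h | h <;> simp [h]

theorem IsUnionOfBlocksFin.exists_mem_iff {n : ℕ} {D : Finset (Fin n × Fin n)}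
    (hD : IsUnionOfBlocksFin n D) :
    ∃ f : Fin n → Finset (Finset (Fin n × Fin n)), ∀ i j, (i, j) ∈ D ↔ ¬ f i ⊆ f j := by
  classical
  obtain ⟨S, hS, rfl⟩ := hD
  choose! V _ _ hV using hS
  refine ⟨fun i => S.filter (i ∈ V ·), fun i j => ?_⟩
  simp only [Finset.mem_sup, id, Finset.not_subset, Finset.mem_filter]
  constructor
  · rintro ⟨b, hb, hij⟩
    rw [hV b hb, Finset.mem_product, Finset.mem_compl] at hij
    exact ⟨b, ⟨hb, hij.1⟩, fun h => hij.2 h.2⟩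
  · rintro ⟨b, ⟨hb, hi⟩, hj⟩
    refine ⟨b, hb, ?_⟩
    rw [hV b hb]
    exact Finset.mem_product.mpr ⟨hi, Finset.mem_compl.mpr fun h => hj ⟨hb, h⟩⟩

theorem mem_prod_compl_union_swap {n : ℕ} {V : Finset (Fin n)} {i j : Fin n} :
    (i, j) ∈ V ×ˢ Vᶜ ∪ (V ×ˢ Vᶜ).image Prod.swap ↔ ¬ (i ∈ V ↔ j ∈ V) := by
  simp only [Finset.image_swap_product, Finset.mem_union, Finset.mem_product, Finset.mem_compl]
  tauto

def BlockPattern {n : ℕ} (C D : Finset (Fin n × Fin n))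
    (A : Matrix (Fin (2*n+1)) (Fin (2*n+1)) ℝ) : Prop :=
  ∀ i j : Fin n,
    ((i, j) ∈ D →
      A (ia i) (ia j) = 0 ∧ A (ia i) (ib j) = 0 ∧ A (ib i) (ia j) = 0 ∧ A (ib i) (ib j) = 0) ∧
    ((i, j) ∉ D ∪ D.image Prod.swap → (i, j) ∈ C ∪ C.image Prod.swap →
      A (ia i) (ia j) = -(A (ib i) (ib j)) ∧ A (ib i) (ia j) = A (ia i) (ib j)) ∧
    ((i, j) ∉ D ∪ D.image Prod.swap → (i, j) ∉ C ∪ C.image Prod.swap →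
      A (ia i) (ia j) = A (ib i) (ib j) ∧ A (ib i) (ia j) = -(A (ia i) (ib j)))

def signOf {n : ℕ} (V : Finset (Fin n)) (i : Fin n) : ℤˣ := if i ∈ V then -1 else 1

theorem BlockPattern.isComplexLinear {n : ℕ} {V : Finset (Fin n)} {D : Finset (Fin n × Fin n)}
    {A : Matrix (Fin (2*n+1)) (Fin (2*n+1)) ℝ} (h : BlockPattern (V ×ˢ Vᶜ) D A)
    (hD : IsUnionOfBlocksFin n D) (hA : A * Aᵀ = 1) :
    IsComplexLinear (toPairs (signOf V) A) := by
  obtain ⟨f, hf⟩ := hD.exists_mem_iff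
  have hsame : ∀ i j, f i = f j → (i, j) ∉ D ∪ D.image Prod.swap := by
    intro i j hij
    simp [hf, hij]
  refine isComplexLinear_of_orthogonal (f := f) (toPairs_mul_transpose _ hA)
    (fun i j s t hij => ?_) (fun i j hij => ?_) (fun i j hij => ?_)
  · obtain ⟨h₁, h₂, h₃, h₄⟩ := (h i j).1 ((hf i j).2 hij)
    fin_cases s <;> fin_cases t <;> simp [toPairs_apply, h₁, h₂, h₃, h₄]
  all_goals
    by_cases hm : (i, j) ∈ V ×ˢ Vᶜ ∪ (V ×ˢ Vᶜ).image Prod.swap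
    · obtain ⟨h₁, h₂⟩ := (h i j).2.1 (hsame i j hij) hm
      rw [mem_prod_compl_union_swap] at hm
      by_cases hi : i ∈ V <;> by_cases hj : j ∈ V <;> simp only [hi, hj] at hm <;>
        simp [toPairs_apply, pairSign, signOf, hi, hj, h₁, h₂] at hm ⊢
    · obtain ⟨h₁, h₂⟩ := (h i j).2.2 (hsame i j hij) hm
      rw [mem_prod_compl_union_swap] at hm
      by_cases hi : i ∈ V <;> by_cases hj : j ∈ V <;> simp only [hi, hj] at hm <;>
        simp [toPairs_apply, pairSign, signOf, hi, hj, h₁, h₂] at hm ⊢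

theorem stmt6 (n g : ℕ) (hn : 2 ≤ n)
    (C : Finset (Fin n × Fin n)) (hC : C = ∅ ∨ IsBlockFin n C)
    (D : Fin (2*g) → Finset (Fin n × Fin n)) (hD : ∀ l, IsUnionOfBlocksFin n (D l))
    (M : Fin (2*g) → Matrix (Fin (2*n+1)) (Fin (2*n+1)) ℝ)
    (hSO : ∀ l, SOodd n (M l))
    (hblock : ∀ l (i j : Fin n),
      ((i, j) ∈ D l →
        M l (ia i) (ia j) = 0 ∧ M l (ia i) (ib j) = 0 ∧
        M l (ib i) (ia j) = 0 ∧ M l (ib i) (ib j) = 0) ∧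
      ((i, j) ∉ D l ∪ (D l).image Prod.swap → (i, j) ∈ C ∪ C.image Prod.swap →
        M l (ia i) (ia j) = -(M l (ib i) (ib j)) ∧ M l (ib i) (ia j) = M l (ia i) (ib j)) ∧
      ((i, j) ∉ D l ∪ (D l).image Prod.swap → (i, j) ∉ C ∪ C.image Prod.swap →
        M l (ia i) (ia j) = M l (ib i) (ib j) ∧ M l (ib i) (ia j) = -(M l (ia i) (ib j))))
    (θ : Fin n → ℝ) (hgen : IsGeneric n θ) :
    ((List.finRange g).map (fun l =>
        commMat n (M ⟨l.val, by have := l.isLt; omega⟩)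
                  (M ⟨g + l.val, by have := l.isLt; omega⟩))).prod
      ≠ torusMat n θ := by
  obtain ⟨V, rfl⟩ : ∃ V : Finset (Fin n), C = V ×ˢ Vᶜ := by
    rcases hC with rfl | ⟨V, -, -, rfl⟩
    exacts [⟨∅, by simp⟩, ⟨V, rfl⟩]
  have hM l : IsComplexLinear (toPairs (signOf V) (M l)) :=
    BlockPattern.isComplexLinear (hblock l) (hD l) (hSO l).1
  intro hprod
  have hmem : toPairs (signOf V) (torusMat n θ) ∈ specialComplexBlocks := by
    rw [← hprod, map_list_prod, List.map_map]
    refine Submonoid.list_prod_mem _ fun A hA => ?_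
    obtain ⟨l, -, rfl⟩ := List.mem_map.mp hA
    simp only [Function.comp, commMat, inv_eq_right_inv (hSO _).1, map_mul, toPairs_transpose]
    exact commutator_mem_specialComplexBlocks (hM _) (hM _)
      (toPairs_mul_transpose _ (hSO _).1) (toPairs_mul_transpose _ (hSO _).1)
  obtain ⟨p, hp, hpeq⟩ := hmem
  rw [toPairs_torusMat] at hpeq
  obtain rfl := complexBlock_injective hpeq
  exact hgen.prod_exp_ne_one (by omega) (signOf V) (by simpa using hp)
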